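/- For complex D×N matrices B and Ψ and any d ∈ {1,...,D}, the tail sum of squared singular values satisfies √(Σ_{j>d} σ_j(B+Ψ)²) ≤ √2 · √(Σ_{j>d} σ_j(B)²) + √2 · ‖Ψ‖_F, i.e., ‖(B+Ψ)_d − (B+Ψ)‖_F ≤ √2 ‖(B)_d − B‖_F + √2 ‖Ψ‖_F. -/

import Mathlib

/-!
Let `Q` be the orthogonal projection onto the span of the left singular vectors of `B` belonging to
`σ_1(B), …, σ_d(B)`, so that `‖(1 - Q) B‖_F² = Σ_{j>d} σ_j(B)²`. By Ky Fan's maximum principle no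
projection of rank `d` captures more than `Σ_{j≤d} σ_j(B+Ψ)²` of `‖B + Ψ‖_F²`, hence
`Σ_{j>d} σ_j(B+Ψ)² ≤ ‖(1 - Q)(B + Ψ)‖_F²`, and the triangle inequality gives
`√(Σ_{j>d} σ_j(B+Ψ)²) ≤ √(Σ_{j>d} σ_j(B)²) + ‖Ψ‖_F`, already without the factors `√2`.
For best approximations, `(B)_d` competes in the minimisation defining `(B+Ψ)_d`.
-/

open Matrix

/-- Frobenius norm of a complex matrix. -/
noncomputable def frob {m n : Type*} [Fintype m] [Fintype n] (M : Matrix m n ℂ) : ℝ :=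
  Real.sqrt (∑ i, ∑ j, ‖M i j‖ ^ 2)

/-- `B` is a best rank-`d` approximation of `A` in Frobenius norm. -/
def IsBestRankApprox {m n : Type*} [Fintype m] [Fintype n] (d : ℕ)
    (A B : Matrix m n ℂ) : Prop :=
  B.rank ≤ d ∧ ∀ C : Matrix m n ℂ, C.rank ≤ d → frob (B - A) ≤ frob (C - A)

/-- The singular values of `M` : nonnegative square roots of the eigenvalues of `M * Mᴴ`
(unsorted enumeration). -/
noncomputable def singVals {D : ℕ} {n : Type*} [Fintype n] (M : Matrix (Fin D) n ℂ) :
    Fin D → ℝ :=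
  fun i => Real.sqrt ((Matrix.isHermitian_mul_conjTranspose_self M).eigenvalues i)

/-- `C` is a scaled left-singular-vector form of `M`, i.e. `C = U Σ = M V` for some
SVD `M = U Σ Vᴴ` of `M`: equivalently `C = M V` with `V` unitary and `Cᴴ C` diagonal with
nonnegative real entries. -/
def IsScaledLeftSV {D : ℕ} {n : Type*} [Fintype n] [DecidableEq n]
    (M C : Matrix (Fin D) n ℂ) : Prop :=
  ∃ V ∈ Matrix.unitaryGroup n ℂ, C = M * V ∧
    ∃ t : n → ℝ, (∀ j, 0 ≤ t j) ∧ Cᴴ * C = Matrix.diagonal (fun j => (t j : ℂ))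

open Finset

open scoped ComplexOrder Matrix.Norms.Frobenius

section Frobenius

variable {m n : Type*} [Fintype m] [Fintype n]

theorem frob_eq_norm (M : Matrix m n ℂ) : frob M = ‖M‖ := by
  simp [frob, frobenius_norm_def, Real.sqrt_eq_rpow]

theorem norm_sq_eq_re_trace_mul_conjTranspose (M : Matrix m n ℂ) :
    ‖M‖ ^ 2 = (M * Mᴴ).trace.re := by
  rw [← frob_eq_norm, frob, Real.sq_sqrt (by positivity)]
  simp [Matrix.trace, Matrix.mul_apply, Complex.mul_conj, Complex.normSq_eq_norm_sq]
  norm_cast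

theorem norm_mul_sq_of_isStarProjection {P : Matrix m m ℂ} (hP : IsStarProjection P)
    (M : Matrix m n ℂ) : ‖P * M‖ ^ 2 = (P * (M * Mᴴ)).trace.re := by
  have hPh : Pᴴ = P := hP.isSelfAdjoint.star_eq
  rw [norm_sq_eq_re_trace_mul_conjTranspose, conjTranspose_mul, hPh, ← Matrix.mul_assoc,
    trace_mul_comm, ← Matrix.mul_assoc, ← Matrix.mul_assoc, hP.isIdempotentElem.eq,
    Matrix.mul_assoc]

variable [DecidableEq m]

theorem norm_sq_eq_norm_mul_sq_add_norm_one_sub_mul_sq {P : Matrix m m ℂ}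
    (hP : IsStarProjection P) (M : Matrix m n ℂ) :
    ‖M‖ ^ 2 = ‖P * M‖ ^ 2 + ‖(1 - P) * M‖ ^ 2 := by
  rw [norm_mul_sq_of_isStarProjection hP, norm_mul_sq_of_isStarProjection hP.one_sub,
    norm_sq_eq_re_trace_mul_conjTranspose, ← Complex.add_re, ← trace_add, ← Matrix.add_mul,
    add_sub_cancel, Matrix.one_mul]

theorem norm_mul_le_of_isStarProjection {P : Matrix m m ℂ} (hP : IsStarProjection P)
    (M : Matrix m n ℂ) : ‖P * M‖ ≤ ‖M‖ := by
  have hpyth := norm_sq_eq_norm_mul_sq_add_norm_one_sub_mul_sq hP M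
  exact (pow_le_pow_iff_left₀ (norm_nonneg _) (norm_nonneg _) two_ne_zero).mp
    (by nlinarith [sq_nonneg ‖(1 - P) * M‖])

end Frobenius

theorem Finset.sum_mul_le_sum_of_threshold {ι : Type*} [Fintype ι] [DecidableEq ι]
    {s : Finset ι} {μ c : ι → ℝ} {t : ℝ} (ht : 0 ≤ t) (hs : ∀ i ∈ s, t ≤ μ i)
    (hsc : ∀ i ∉ s, μ i ≤ t) (hc0 : ∀ i, 0 ≤ c i) (hc1 : ∀ i, c i ≤ 1) (hcs : ∑ i, c i ≤ #s) :
    ∑ i, μ i * c i ≤ ∑ i ∈ s, μ i := by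
  have hin : ∑ i ∈ s, (μ i - t) * c i ≤ ∑ i ∈ s, (μ i - t) :=
    sum_le_sum fun i hi => mul_le_of_le_one_right (sub_nonneg.mpr (hs i hi)) (hc1 i)
  have hout : ∑ i ∈ sᶜ, (μ i - t) * c i ≤ 0 :=
    sum_nonpos fun i hi =>
      mul_nonpos_of_nonpos_of_nonneg (sub_nonpos.mpr (hsc i (mem_compl.mp hi))) (hc0 i)
  have hsplit := sum_add_sum_compl s fun i => (μ i - t) * c i
  have hmass : t * ∑ i, c i ≤ t * #s := mul_le_mul_of_nonneg_left hcs ht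
  calc ∑ i, μ i * c i = ∑ i, (μ i - t) * c i + t * ∑ i, c i := by
        rw [mul_sum, ← sum_add_distrib]; exact sum_congr rfl fun i _ => by ring
    _ ≤ ∑ i ∈ s, (μ i - t) + t * #s := by linarith
    _ = ∑ i ∈ s, μ i := by rw [sum_sub_distrib, sum_const, nsmul_eq_mul]; ring

theorem Antitone.exists_threshold {D : ℕ} {μ : Fin D → ℝ} (hμ : Antitone μ)
    (hμ0 : ∀ i, 0 ≤ μ i) (d : ℕ) :
    ∃ t, 0 ≤ t ∧ (∀ i : Fin D, (i : ℕ) < d → t ≤ μ i) ∧ ∀ i : Fin D, d ≤ (i : ℕ) → μ i ≤ t := by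
  by_cases hd : d < D
  · exact ⟨μ ⟨d, hd⟩, hμ0 _, fun i hi => hμ (Fin.mk_le_of_le_val hi.le),
      fun i hi => hμ (Fin.le_def.mpr hi)⟩
  · exact ⟨0, le_rfl, fun i _ => hμ0 i, fun i hi => absurd i.2 (by omega)⟩

section StarProjection

variable {n : Type*} [Fintype n]

theorem IsStarProjection.posSemidef {P : Matrix n n ℂ} (hP : IsStarProjection P) :
    P.PosSemidef := by
  have hP' : Pᴴ * P = P := by
    rw [← star_eq_conjTranspose, hP.isSelfAdjoint.star_eq, hP.isIdempotentElem.eq]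
  simpa only [hP'] using posSemidef_conjTranspose_mul_self P

theorem IsStarProjection.re_diag_nonneg {P : Matrix n n ℂ} (hP : IsStarProjection P) (j : n) :
    0 ≤ (P j j).re :=
  (Complex.nonneg_iff.mp hP.posSemidef.diag_nonneg).1

variable [DecidableEq n]

theorem IsStarProjection.re_diag_le_one {P : Matrix n n ℂ} (hP : IsStarProjection P) (j : n) :
    (P j j).re ≤ 1 := by
  simpa using hP.one_sub.re_diag_nonneg j

theorem IsStarProjection.unitary_conj {P : Matrix n n ℂ} (hP : IsStarProjection P)
    (U : unitary (Matrix n n ℂ)) :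
    IsStarProjection ((U : Matrix n n ℂ) * P * star (U : Matrix n n ℂ)) :=
  hP.map (Unitary.conjStarAlgAut ℂ _ U)

theorem re_trace_mul_unitary_conj_diagonal (Q : Matrix n n ℂ) (U : unitary (Matrix n n ℂ))
    (μ : n → ℝ) :
    (Q * ((U : Matrix n n ℂ) * diagonal (RCLike.ofReal ∘ μ) * star (U : Matrix n n ℂ))).trace.re
      = ∑ j, μ j * ((star (U : Matrix n n ℂ) * Q * U) j j).re := by
  rw [← Matrix.mul_assoc, trace_mul_comm, ← Matrix.mul_assoc, ← Matrix.mul_assoc, trace,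
    Complex.re_sum]
  simp [mul_comm]

theorem Matrix.IsHermitian.re_trace_mul_le_sum_eigenvalues {H : Matrix n n ℂ}
    (hH : H.IsHermitian) {T : Finset n} {t : ℝ} (ht : 0 ≤ t)
    (hT : ∀ j ∈ T, t ≤ hH.eigenvalues j) (hTc : ∀ j ∉ T, hH.eigenvalues j ≤ t)
    {Q : Matrix n n ℂ} (hQ : IsStarProjection Q) (htr : Q.trace.re ≤ #T) :
    (Q * H).trace.re ≤ ∑ j ∈ T, hH.eigenvalues j := by
  conv_lhs => rw [hH.spectral_theorem, Unitary.conjStarAlgAut_apply]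
  rw [re_trace_mul_unitary_conj_diagonal]
  set U := hH.eigenvectorUnitary
  have hQ' : IsStarProjection (star (U : Matrix n n ℂ) * Q * (U : Matrix n n ℂ)) := by
    simpa using hQ.unitary_conj (star U)
  have hweights : ∑ j, ((star (U : Matrix n n ℂ) * Q * (U : Matrix n n ℂ)) j j).re
      = Q.trace.re := by
    rw [← Complex.re_sum]
    change (trace (star (U : Matrix n n ℂ) * Q * (U : Matrix n n ℂ))).re = _
    rw [trace_mul_cycle, Unitary.mul_star_self_of_mem U.2, Matrix.one_mul]
  exact sum_mul_le_sum_of_threshold ht hT hTc hQ'.re_diag_nonneg hQ'.re_diag_le_one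
    (hweights.trans_le htr)

theorem Matrix.IsHermitian.exists_isStarProjection_re_trace_mul_eq {H : Matrix n n ℂ}
    (hH : H.IsHermitian) (T : Finset n) :
    ∃ Q : Matrix n n ℂ, IsStarProjection Q ∧ Q.trace.re = #T ∧
      (Q * H).trace.re = ∑ j ∈ T, hH.eigenvalues j := by
  set U := hH.eigenvectorUnitary
  set E : Matrix n n ℂ := diagonal fun j => if j ∈ T then 1 else 0
  have hE : IsStarProjection E := by
    refine ⟨?_, ?_⟩
    · simp [E, IsIdempotentElem, diagonal_mul_diagonal]
    · simp [E, IsSelfAdjoint, star_eq_conjTranspose, diagonal_conjTranspose]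
  have hUEU : star (U : Matrix n n ℂ) * (U * E * star (U : Matrix n n ℂ)) * U = E := by
    simp [← Matrix.mul_assoc, Matrix.mul_assoc _ _ (U : Matrix n n ℂ)]
  refine ⟨U * E * star (U : Matrix n n ℂ), hE.unitary_conj U, ?_, ?_⟩
  · rw [trace_mul_cycle, Unitary.star_mul_self_of_mem U.2, Matrix.one_mul]
    simp [E]
  · conv_lhs => rw [hH.spectral_theorem, Unitary.conjStarAlgAut_apply]
    rw [re_trace_mul_unitary_conj_diagonal, hUEU]
    simp [E, apply_ite Complex.re, Finset.sum_ite_mem]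

end StarProjection

section SingularValues

variable {D : ℕ} {n : Type*} [Fintype n]

theorem sq_singVals (M : Matrix (Fin D) n ℂ) (i : Fin D) :
    singVals M i ^ 2 = (isHermitian_mul_conjTranspose_self M).eigenvalues i :=
  Real.sq_sqrt (eigenvalues_self_mul_conjTranspose_nonneg M i)

theorem sum_sq_singVals_comp (M : Matrix (Fin D) n ℂ) (e : Equiv.Perm (Fin D)) :
    ∑ i, singVals M (e i) ^ 2 = ‖M‖ ^ 2 := by
  rw [Equiv.sum_comp e (fun j => singVals M j ^ 2), norm_sq_eq_re_trace_mul_conjTranspose,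
    (isHermitian_mul_conjTranspose_self M).trace_eq_sum_eigenvalues, Complex.re_sum]
  simp [sq_singVals]

theorem norm_mul_sq_le_sum_sq_singVals {A : Matrix (Fin D) n ℂ} {σ : Fin D → ℝ}
    (hσ : Antitone σ) {e : Equiv.Perm (Fin D)} (he : σ = singVals A ∘ e)
    {Q : Matrix (Fin D) (Fin D) ℂ} (hQ : IsStarProjection Q) (d : ℕ)
    (htr : Q.trace.re ≤ #(univ.filter fun i : Fin D => (i : ℕ) < d)) :
    ‖Q * A‖ ^ 2 ≤ ∑ i ∈ univ.filter (fun i : Fin D => (i : ℕ) < d), σ i ^ 2 := by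
  set hH := isHermitian_mul_conjTranspose_self A
  have hσ0 : ∀ i, 0 ≤ σ i := fun i => he ▸ Real.sqrt_nonneg _
  have hσsq : ∀ j, hH.eigenvalues j = σ (e.symm j) ^ 2 := fun j => by
    simp [he, sq_singVals]
  obtain ⟨t, ht0, hhead, htail⟩ :=
    Antitone.exists_threshold (μ := fun i => σ i ^ 2)
      (fun i j hij => pow_le_pow_left₀ (hσ0 j) (hσ hij) 2) (fun i => sq_nonneg _) d
  set T := (univ.filter fun i : Fin D => (i : ℕ) < d).map e.toEmbedding
  have hT : ∀ j ∈ T, t ≤ hH.eigenvalues j := fun j hj => by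
    rw [hσsq]; exact hhead _ (by simpa [T] using hj)
  have hTc : ∀ j ∉ T, hH.eigenvalues j ≤ t := fun j hj => by
    rw [hσsq]; exact htail _ (by simpa [T] using hj)
  calc ‖Q * A‖ ^ 2 = (Q * (A * Aᴴ)).trace.re := norm_mul_sq_of_isStarProjection hQ A
    _ ≤ ∑ j ∈ T, hH.eigenvalues j :=
        hH.re_trace_mul_le_sum_eigenvalues ht0 hT hTc hQ (by simpa [T] using htr)
    _ = ∑ i ∈ univ.filter (fun i : Fin D => (i : ℕ) < d), σ i ^ 2 := by
        simp [T, hσsq]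

theorem exists_isStarProjection_norm_mul_sq_eq (B : Matrix (Fin D) n ℂ)
    (e : Equiv.Perm (Fin D)) (s : Finset (Fin D)) :
    ∃ Q : Matrix (Fin D) (Fin D) ℂ, IsStarProjection Q ∧ Q.trace.re = #s ∧
      ‖Q * B‖ ^ 2 = ∑ i ∈ s, singVals B (e i) ^ 2 := by
  obtain ⟨Q, hQ, htr, hQB⟩ :=
    (isHermitian_mul_conjTranspose_self B).exists_isStarProjection_re_trace_mul_eq
      (s.map e.toEmbedding)
  refine ⟨Q, hQ, by simpa using htr, ?_⟩
  rw [norm_mul_sq_of_isStarProjection hQ, hQB, sum_map]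
  simp [sq_singVals]

theorem sqrt_sum_tail_sq_singVals_add_le (d : ℕ) (B Ψ : Matrix (Fin D) n ℂ)
    {σB σS : Fin D → ℝ} (hσS : Antitone σS)
    (hB : ∃ e : Equiv.Perm (Fin D), σB = singVals B ∘ e)
    (hS : ∃ e : Equiv.Perm (Fin D), σS = singVals (B + Ψ) ∘ e) :
    √(∑ i ∈ univ.filter (fun i : Fin D => d ≤ (i : ℕ)), σS i ^ 2) ≤
      √(∑ i ∈ univ.filter (fun i : Fin D => d ≤ (i : ℕ)), σB i ^ 2) + ‖Ψ‖ := by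
  obtain ⟨eB, rfl⟩ := hB
  obtain ⟨eS, rfl⟩ := hS
  simp only [Function.comp_apply]
  have hsplit (f : Fin D → ℝ) : ∑ i ∈ univ.filter (fun i : Fin D => (i : ℕ) < d), f i
      + ∑ i ∈ univ.filter (fun i : Fin D => d ≤ (i : ℕ)), f i = ∑ i, f i := by
    simpa only [not_lt] using sum_filter_add_sum_filter_not univ (fun i : Fin D => (i : ℕ) < d) f
  obtain ⟨Q, hQ, htr, hQB⟩ :=
    exists_isStarProjection_norm_mul_sq_eq B eB (univ.filter fun i : Fin D => (i : ℕ) < d)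
  have htailS : ∑ i ∈ univ.filter (fun i : Fin D => d ≤ (i : ℕ)), singVals (B + Ψ) (eS i) ^ 2
      ≤ ‖(1 - Q) * (B + Ψ)‖ ^ 2 := by
    have hhead := norm_mul_sq_le_sum_sq_singVals hσS rfl hQ d htr.le
    simp only [Function.comp_apply] at hhead
    have hpyth := norm_sq_eq_norm_mul_sq_add_norm_one_sub_mul_sq hQ (B + Ψ)
    have htotal := sum_sq_singVals_comp (B + Ψ) eS
    have hparts := hsplit fun i => singVals (B + Ψ) (eS i) ^ 2
    linarith
  have htailB : ‖(1 - Q) * B‖ ^ 2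
      = ∑ i ∈ univ.filter (fun i : Fin D => d ≤ (i : ℕ)), singVals B (eB i) ^ 2 := by
    have hpyth := norm_sq_eq_norm_mul_sq_add_norm_one_sub_mul_sq hQ B
    have htotal := sum_sq_singVals_comp B eB
    have hparts := hsplit fun i => singVals B (eB i) ^ 2
    linarith
  calc √(∑ i ∈ univ.filter (fun i : Fin D => d ≤ (i : ℕ)), singVals (B + Ψ) (eS i) ^ 2)
      ≤ ‖(1 - Q) * (B + Ψ)‖ := Real.sqrt_le_iff.mpr ⟨norm_nonneg _, htailS⟩
    _ ≤ ‖(1 - Q) * B‖ + ‖(1 - Q) * Ψ‖ := by rw [Matrix.mul_add]; exact norm_add_le _ _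
    _ ≤ √(∑ i ∈ univ.filter (fun i : Fin D => d ≤ (i : ℕ)), singVals B (eB i) ^ 2) + ‖Ψ‖ := by
        rw [← htailB, Real.sqrt_sq (norm_nonneg _)]
        gcongr
        exact norm_mul_le_of_isStarProjection hQ.one_sub Ψ

end SingularValues

theorem frob_sub_add_le_of_isBestRankApprox {m n : Type*} [Fintype m] [Fintype n] {d : ℕ}
    {B Ψ Sd Bd : Matrix m n ℂ} (hSd : IsBestRankApprox d (B + Ψ) Sd) (hBd : Bd.rank ≤ d) :
    frob (Sd - (B + Ψ)) ≤ frob (Bd - B) + frob Ψ :=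
  calc frob (Sd - (B + Ψ)) ≤ frob (Bd - (B + Ψ)) := hSd.2 Bd hBd
    _ = ‖(Bd - B) - Ψ‖ := by rw [frob_eq_norm, sub_sub]
    _ ≤ frob (Bd - B) + frob Ψ := by rw [frob_eq_norm, frob_eq_norm]; exact norm_sub_le _ _

theorem le_sqrt_two_mul_add_sqrt_two_mul {a b c : ℝ} (hb : 0 ≤ b) (hc : 0 ≤ c)
    (h : a ≤ b + c) : a ≤ √2 * b + √2 * c :=
  h.trans <| add_le_add (le_mul_of_one_le_left hb Real.one_lt_sqrt_two.le)
    (le_mul_of_one_le_left hc Real.one_lt_sqrt_two.le)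

theorem stmt7_general {D N : ℕ} (d : ℕ)
    (B Ψ : Matrix (Fin D) (Fin N) ℂ)
    (σB σS : Fin D → ℝ) (hσS : Antitone σS)
    (hB : ∃ e : Equiv.Perm (Fin D), σB = singVals B ∘ e)
    (hS : ∃ e : Equiv.Perm (Fin D), σS = singVals (B + Ψ) ∘ e) :
    (Real.sqrt (∑ i ∈ Finset.univ.filter (fun i : Fin D => d ≤ (i : ℕ)), σS i ^ 2) ≤
      Real.sqrt 2 * Real.sqrt (∑ i ∈ Finset.univ.filter (fun i : Fin D => d ≤ (i : ℕ)), σB i ^ 2)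
        + Real.sqrt 2 * frob Ψ) ∧
    ∀ Sd : Matrix (Fin D) (Fin N) ℂ, IsBestRankApprox d (B + Ψ) Sd →
    ∀ Bd : Matrix (Fin D) (Fin N) ℂ, IsBestRankApprox d B Bd →
      frob (Sd - (B + Ψ)) ≤ Real.sqrt 2 * frob (Bd - B) + Real.sqrt 2 * frob Ψ := by
  have hΨ : 0 ≤ frob Ψ := Real.sqrt_nonneg _
  refine ⟨?_, fun Sd hSd Bd hBd => ?_⟩
  · refine le_sqrt_two_mul_add_sqrt_two_mul (Real.sqrt_nonneg _) hΨ ?_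
    simpa only [frob_eq_norm] using sqrt_sum_tail_sq_singVals_add_le d B Ψ hσS hB hS
  · exact le_sqrt_two_mul_add_sqrt_two_mul (Real.sqrt_nonneg _) hΨ
      (frob_sub_add_le_of_isBestRankApprox hSd hBd.1)

/-- Tail sums of squared singular values of `B + Ψ` are controlled by those of `B` plus the
Frobenius norm of `Ψ`: `√(Σ_{j>d} σ_j(B+Ψ)²) ≤ √2 √(Σ_{j>d} σ_j(B)²) + √2 ‖Ψ‖_F`;
equivalently `‖(B+Ψ)_d − (B+Ψ)‖_F ≤ √2 ‖(B)_d − B‖_F + √2 ‖Ψ‖_F`. -/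
theorem stmt7 {D N : ℕ} (d : ℕ) (hd1 : 1 ≤ d) (hdD : d ≤ D)
    (B Ψ : Matrix (Fin D) (Fin N) ℂ)
    (σB σS : Fin D → ℝ) (hσB : Antitone σB) (hσS : Antitone σS)
    (hB : ∃ e : Equiv.Perm (Fin D), σB = singVals B ∘ e)
    (hS : ∃ e : Equiv.Perm (Fin D), σS = singVals (B + Ψ) ∘ e) :
    (Real.sqrt (∑ i ∈ Finset.univ.filter (fun i : Fin D => d ≤ (i : ℕ)), σS i ^ 2) ≤
      Real.sqrt 2 * Real.sqrt (∑ i ∈ Finset.univ.filter (fun i : Fin D => d ≤ (i : ℕ)), σB i ^ 2)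
        + Real.sqrt 2 * frob Ψ) ∧
    ∀ Sd : Matrix (Fin D) (Fin N) ℂ, IsBestRankApprox d (B + Ψ) Sd →
    ∀ Bd : Matrix (Fin D) (Fin N) ℂ, IsBestRankApprox d B Bd →
      frob (Sd - (B + Ψ)) ≤ Real.sqrt 2 * frob (Bd - B) + Real.sqrt 2 * frob Ψ :=
  stmt7_general d B Ψ σB σS hσS hB hS
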